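/- Let G be a flow-admissible signed series-parallel graph with no nowhere-zero 6-flow that has the minimum number of edges among all such graphs. If G is of series type (i.e., G is a series connection of its parts), then each endpart of G is unbalanced. -/

import Mathlib

/-!
Signed multigraphs (parallel edges allowed), two-terminal graphs,
series/parallel connections and flows, following the terminology of
Kaiser–Rollová, "Nowhere-zero flows in signed series-parallel graphs".

Vertices and edges are labelled by natural numbers.  An edge `e` has the
two endvertices `fst e` and `snd e` (its two half-edges are the ends at
`fst e` and at `snd e`), and `sign e = true` means that `e` is positive.
-/

/-- The value `+1` (pointing towards its endvertex) or `-1` (pointing away)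
of a Boolean direction of a half-edge. -/
def dirVal (b : Bool) : ℤ := if b then 1 else -1

/-- A signed multigraph. -/
structure SignedGraph where
  verts : Finset ℕ
  edges : Finset ℕ
  fst : ℕ → ℕ
  snd : ℕ → ℕ
  sign : ℕ → Bool
  fst_mem : ∀ e ∈ edges, fst e ∈ verts
  snd_mem : ∀ e ∈ edges, snd e ∈ verts

namespace SignedGraph

/-- Edge `e` joins the vertices `u` and `v`. -/
def Joins (G : SignedGraph) (e u v : ℕ) : Prop :=
  (G.fst e = u ∧ G.snd e = v) ∨ (G.fst e = v ∧ G.snd e = u)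

/-- `u` and `v` are adjacent (joined by some edge). -/
def Adj (G : SignedGraph) (u v : ℕ) : Prop := ∃ e ∈ G.edges, G.Joins e u v

/-- The degree of a vertex (each incidence of an edge counts once,
so loops count twice). -/
def degree (G : SignedGraph) (v : ℕ) : ℕ :=
  ∑ e ∈ G.edges, ((if G.fst e = v then 1 else 0) + (if G.snd e = v then 1 else 0))

/-- `e` and `f` are parallel edges: distinct edges joining the same
pair of vertices. -/
def Parallel (G : SignedGraph) (e f : ℕ) : Prop :=
  e ≠ f ∧ ((G.fst e = G.fst f ∧ G.snd e = G.snd f) ∨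
           (G.fst e = G.snd f ∧ G.snd e = G.fst f))

/-- `v` is contained in a 2-cycle (a cycle formed by two parallel edges). -/
def In2Cycle (G : SignedGraph) (v : ℕ) : Prop :=
  ∃ e ∈ G.edges, ∃ f ∈ G.edges, G.Parallel e f ∧ G.fst e ≠ G.snd e ∧
    (G.fst e = v ∨ G.snd e = v)

/-- `beta G` is the number of distinct 2-cycles of `G`. -/
def beta (G : SignedGraph) : ℕ :=
  ((G.edges ×ˢ G.edges).filter fun p => p.1 < p.2 ∧ G.fst p.1 ≠ G.snd p.1 ∧
     ((G.fst p.1 = G.fst p.2 ∧ G.snd p.1 = G.snd p.2) ∨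
      (G.fst p.1 = G.snd p.2 ∧ G.snd p.1 = G.fst p.2))).card

/-- An orientation of a signed graph: `o₁ e` (resp. `o₂ e`) tells whether the
half-edge of `e` at `fst e` (resp. at `snd e`) points towards its endvertex.
Of the two half-edges of a positive edge exactly one points towards its
endvertex, while for a negative edge none or both do. -/
def IsOrientation (G : SignedGraph) (o₁ o₂ : ℕ → Bool) : Prop :=
  ∀ e ∈ G.edges, (G.sign e = true → o₁ e ≠ o₂ e) ∧ (G.sign e = false → o₁ e = o₂ e)

/-- The excess (inflow minus outflow) at a vertex `v`. -/
def excess (G : SignedGraph) (o₁ o₂ : ℕ → Bool) (φ : ℕ → ℤ) (v : ℕ) : ℤ :=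
  ∑ e ∈ G.edges, ((if G.fst e = v then dirVal (o₁ e) * φ e else 0) +
                  (if G.snd e = v then dirVal (o₂ e) * φ e else 0))

/-- `(o₁, o₂, φ)` is a nowhere-zero `k`-flow on `G`: an orientation together
with a valuation of the edges by nonzero integers of absolute value less
than `k` such that at every vertex the inflow equals the outflow. -/
structure IsNZFlow (G : SignedGraph) (k : ℕ) (o₁ o₂ : ℕ → Bool) (φ : ℕ → ℤ) : Prop where
  orient : G.IsOrientation o₁ o₂
  nonzero : ∀ e ∈ G.edges, φ e ≠ 0
  bounded : ∀ e ∈ G.edges, |φ e| < (k : ℤ)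
  conserve : ∀ v ∈ G.verts, G.excess o₁ o₂ φ v = 0

/-- `G` admits a nowhere-zero `k`-flow. -/
def HasNZFlow (G : SignedGraph) (k : ℕ) : Prop := ∃ o₁ o₂ φ, G.IsNZFlow k o₁ o₂ φ

/-- `G` is flow-admissible: it admits a nowhere-zero `k`-flow for some `k`. -/
def FlowAdmissible (G : SignedGraph) : Prop := ∃ k, G.HasNZFlow k

/-- `(vs, es)` is a cycle of `G`: distinct vertices `vs = [v₀, …, v_{m-1}]`,
distinct edges `es = [e₀, …, e_{m-1}]`, where `eᵢ` joins `vᵢ` and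
`v_{i+1 (mod m)}`. -/
structure IsCycle (G : SignedGraph) (vs es : List ℕ) : Prop where
  nonempty : es ≠ []
  len : vs.length = es.length
  vnodup : vs.Nodup
  enodup : es.Nodup
  vmem : ∀ v ∈ vs, v ∈ G.verts
  emem : ∀ e ∈ es, e ∈ G.edges
  link : ∀ i < es.length,
    G.Joins (es.getD i 0) (vs.getD i 0) (vs.getD ((i + 1) % vs.length) 0)

/-- The number of negative edges in a list of edges. -/
def negCount (G : SignedGraph) (es : List ℕ) : ℕ :=
  (es.filter fun e => G.sign e = false).length

/-- A balanced cycle: a cycle with an even number of negative edges. -/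
def IsBalancedCycle (G : SignedGraph) (vs es : List ℕ) : Prop :=
  G.IsCycle vs es ∧ Even (G.negCount es)

/-- An unbalanced cycle: a cycle with an odd number of negative edges. -/
def IsUnbalancedCycle (G : SignedGraph) (vs es : List ℕ) : Prop :=
  G.IsCycle vs es ∧ Odd (G.negCount es)

/-- A signed graph is unbalanced if it contains an unbalanced cycle. -/
def IsUnbalanced (G : SignedGraph) : Prop := ∃ vs es, G.IsUnbalancedCycle vs es

/-- `(vs, es)` is a path of `G` (possibly trivial, i.e. a single vertex). -/
structure IsPath (G : SignedGraph) (vs es : List ℕ) : Prop where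
  nonempty : vs ≠ []
  len : vs.length = es.length + 1
  vnodup : vs.Nodup
  enodup : es.Nodup
  vmem : ∀ v ∈ vs, v ∈ G.verts
  emem : ∀ e ∈ es, e ∈ G.edges
  link : ∀ i < es.length, G.Joins (es.getD i 0) (vs.getD i 0) (vs.getD (i + 1) 0)

/-- A barbell: two edge-disjoint unbalanced cycles together with a path,
which either joins two vertex-disjoint cycles and is internally
vertex-disjoint from them, or is the trivial path at the single
common vertex of the two cycles. -/
structure IsBarbell (G : SignedGraph) (vs₁ es₁ vs₂ es₂ pvs pes : List ℕ) : Prop where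
  cyc1 : G.IsUnbalancedCycle vs₁ es₁
  cyc2 : G.IsUnbalancedCycle vs₂ es₂
  edge_disj : ∀ e ∈ es₁, e ∉ es₂
  path : G.IsPath pvs pes
  shape :
    ((∀ v ∈ vs₁, v ∉ vs₂) ∧
      pvs.getD 0 0 ∈ vs₁ ∧ pvs.getD (pvs.length - 1) 0 ∈ vs₂ ∧
      (∀ i, 0 < i → i < pvs.length - 1 → pvs.getD i 0 ∉ vs₁ ∧ pvs.getD i 0 ∉ vs₂)) ∨
    (∃ w, w ∈ vs₁ ∧ w ∈ vs₂ ∧ (∀ v ∈ vs₁, v ∈ vs₂ → v = w) ∧ pvs = [w] ∧ pes = [])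

/-- The edge `e` is contained in a signed circuit (a balanced cycle
or a barbell). -/
def InSignedCircuit (G : SignedGraph) (e : ℕ) : Prop :=
  (∃ vs es, G.IsBalancedCycle vs es ∧ e ∈ es) ∨
  (∃ vs₁ es₁ vs₂ es₂ pvs pes, G.IsBarbell vs₁ es₁ vs₂ es₂ pvs pes ∧
    (e ∈ es₁ ∨ e ∈ es₂ ∨ e ∈ pes))

/-- `H` is a subgraph of `G` (with the same labels, endvertices and signs). -/
def IsSubgraph (H G : SignedGraph) : Prop :=
  H.verts ⊆ G.verts ∧ H.edges ⊆ G.edges ∧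
  ∀ e ∈ H.edges, H.fst e = G.fst e ∧ H.snd e = G.snd e ∧ H.sign e = G.sign e

/-- Switching at a vertex `v`: the signs of all edges incident with `v`
(i.e. with exactly one end at `v`) are inverted. -/
def switchAt (G : SignedGraph) (v : ℕ) : SignedGraph where
  verts := G.verts
  edges := G.edges
  fst := G.fst
  snd := G.snd
  sign := fun e => if xor (G.fst e == v) (G.snd e == v) then !(G.sign e) else G.sign e
  fst_mem := G.fst_mem
  snd_mem := G.snd_mem

/-- Connectedness of a (nonempty) signed graph. -/
def Connected (G : SignedGraph) : Prop :=
  G.verts.Nonempty ∧ ∀ u ∈ G.verts, ∀ v ∈ G.verts, Relation.ReflTransGen G.Adj u v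

/-- Deletion of a vertex together with all incident edges. -/
def deleteVert (G : SignedGraph) (v : ℕ) : SignedGraph where
  verts := G.verts.erase v
  edges := G.edges.filter fun e => G.fst e ≠ v ∧ G.snd e ≠ v
  fst := G.fst
  snd := G.snd
  sign := G.sign
  fst_mem := by
    intro e he
    simp only [Finset.mem_filter] at he
    exact Finset.mem_erase.mpr ⟨he.2.1, G.fst_mem e he.1⟩
  snd_mem := by
    intro e he
    simp only [Finset.mem_filter] at he
    exact Finset.mem_erase.mpr ⟨he.2.2, G.snd_mem e he.1⟩

/-- `G` is 2-connected: it is connected and remains connected after the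
deletion of any single vertex. -/
def TwoConnected (G : SignedGraph) : Prop :=
  G.Connected ∧ ∀ v ∈ G.verts, (G.deleteVert v).Connected

end SignedGraph

/-- A two-terminal signed graph: a signed graph with two distinguished
distinct vertices, the source terminal `s` and the target terminal `t`. -/
structure TTGraph extends SignedGraph where
  s : ℕ
  t : ℕ
  s_mem : s ∈ verts
  t_mem : t ∈ verts
  s_ne_t : s ≠ t

namespace TTGraph

/-- Switching at a vertex of a two-terminal signed graph. -/
def switchAt (G : TTGraph) (v : ℕ) : TTGraph where
  toSignedGraph := G.toSignedGraph.switchAt v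
  s := G.s
  t := G.t
  s_mem := G.s_mem
  t_mem := G.t_mem
  s_ne_t := G.s_ne_t

end TTGraph

/-- Two two-terminal signed graphs are switching equivalent if one is
obtained from the other by a finite sequence of switchings. -/
def SwitchEquiv (G G' : TTGraph) : Prop :=
  Relation.ReflTransGen (fun A B => ∃ v ∈ A.verts, B = A.switchAt v) G G'

/-- `G` is the series connection `S(H₁, H₂)`: `H₁` and `H₂` are subgraphs
of `G` sharing exactly the vertex `H₁.t = H₂.s`, partitioning the edges,
with `G.s = H₁.s` and `G.t = H₂.t`. -/
structure IsSeriesConn2 (G H₁ H₂ : TTGraph) : Prop where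
  sub1 : SignedGraph.IsSubgraph H₁.toSignedGraph G.toSignedGraph
  sub2 : SignedGraph.IsSubgraph H₂.toSignedGraph G.toSignedGraph
  vert_union : H₁.verts ∪ H₂.verts = G.verts
  vert_inter : H₁.verts ∩ H₂.verts = {H₁.t}
  mid : H₁.t = H₂.s
  edge_union : H₁.edges ∪ H₂.edges = G.edges
  edge_disj : Disjoint H₁.edges H₂.edges
  src : G.s = H₁.s
  tgt : G.t = H₂.t

/-- `G` is the parallel connection `P(H₁, H₂)`: `H₁` and `H₂` are subgraphs
of `G` sharing exactly the two terminals, partitioning the edges, with the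
terminals of `G`, `H₁` and `H₂` identified. -/
structure IsParallelConn2 (G H₁ H₂ : TTGraph) : Prop where
  sub1 : SignedGraph.IsSubgraph H₁.toSignedGraph G.toSignedGraph
  sub2 : SignedGraph.IsSubgraph H₂.toSignedGraph G.toSignedGraph
  vert_union : H₁.verts ∪ H₂.verts = G.verts
  vert_inter : H₁.verts ∩ H₂.verts = {H₁.s, H₁.t}
  src_eq : H₁.s = H₂.s
  tgt_eq : H₁.t = H₂.t
  edge_union : H₁.edges ∪ H₂.edges = G.edges
  edge_disj : Disjoint H₁.edges H₂.edges
  src : G.s = H₁.s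
  tgt : G.t = H₁.t

/-- `G` is a (signed) copy of `K₂`: a single edge joining the two terminals. -/
def IsSignedK2 (G : TTGraph) : Prop :=
  G.verts = {G.s, G.t} ∧ ∃ e, G.edges = {e} ∧ G.toSignedGraph.Joins e G.s G.t

/-- Series-parallel two-terminal graphs: obtained from copies of `K₂` by
iterated series and parallel connections. -/
inductive IsSP : TTGraph → Prop
  | k2 {G} : IsSignedK2 G → IsSP G
  | series {G H₁ H₂} : IsSeriesConn2 G H₁ H₂ → IsSP H₁ → IsSP H₂ → IsSP G
  | parallel {G H₁ H₂} : IsParallelConn2 G H₁ H₂ → IsSP H₁ → IsSP H₂ → IsSP G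

/-- `G` is the series connection `S(H₁, …, Hₙ)` of the graphs in the list
(of length at least two). -/
inductive IsSeriesConnList : TTGraph → List TTGraph → Prop
  | two {G H₁ H₂} : IsSeriesConn2 G H₁ H₂ → IsSeriesConnList G [H₁, H₂]
  | cons {G G' H l} : IsSeriesConn2 G H G' → IsSeriesConnList G' l →
      IsSeriesConnList G (H :: l)

/-- `G` is the parallel connection `P(H₁, …, Hₙ)` of the graphs in the list
(of length at least two). -/
inductive IsParallelConnList : TTGraph → List TTGraph → Prop
  | two {G H₁ H₂} : IsParallelConn2 G H₁ H₂ → IsParallelConnList G [H₁, H₂]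
  | cons {G G' H l} : IsParallelConn2 G H G' → IsParallelConnList G' l →
      IsParallelConnList G (H :: l)

/-- `l` is the list of parts of `G` for a series connection: `G` is a series
connection of the series-parallel graphs in `l`, with `l` of maximum length. -/
def IsSeriesPartsOf (G : TTGraph) (l : List TTGraph) : Prop :=
  IsSeriesConnList G l ∧ (∀ H ∈ l, IsSP H) ∧
  ∀ l', IsSeriesConnList G l' → (∀ H ∈ l', IsSP H) → l'.length ≤ l.length

/-- `l` is the list of parts of `G` for a parallel connection. -/
def IsParallelPartsOf (G : TTGraph) (l : List TTGraph) : Prop :=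
  IsParallelConnList G l ∧ (∀ H ∈ l, IsSP H) ∧
  ∀ l', IsParallelConnList G l' → (∀ H ∈ l', IsSP H) → l'.length ≤ l.length

/-- `l` is the list of parts of `G`. -/
def IsPartsOf (G : TTGraph) (l : List TTGraph) : Prop :=
  IsSeriesPartsOf G l ∨ IsParallelPartsOf G l

/-- `H` is a part of `G`. -/
def IsPart (H G : TTGraph) : Prop := ∃ l, IsPartsOf G l ∧ H ∈ l

/-- `H` is a piece of `G`: there is a sequence `H = H₀, H₁, …, Hₘ = G`
where each `Hⱼ` is a part of `H_{j+1}`; in particular `G` is a piece of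
itself. -/
def IsPiece (H G : TTGraph) : Prop := Relation.ReflTransGen IsPart H G

/-- `G` is of series type: it is a series connection of its parts. -/
def IsSeriesType (G : TTGraph) : Prop := ∃ l, IsSeriesPartsOf G l

/-- `G` is of parallel type: it is a parallel connection of its parts. -/
def IsParallelType (G : TTGraph) : Prop := ∃ l, IsParallelPartsOf G l

/-- `H` is an endpart of `G`: the first or last part of a series
decomposition of `G` into its parts. -/
def IsEndpartOf (H G : TTGraph) : Prop :=
  ∃ l, IsSeriesPartsOf G l ∧ (l.head? = some H ∨ l.getLast? = some H)

/-- `DepthLe G d`: the depth of `G` is at most `d`.  The depth of a signed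
`K₂` is `0`; otherwise it is `1` plus the maximum depth of a part. -/
inductive DepthLe : TTGraph → ℕ → Prop
  | k2 {G d} : IsSignedK2 G → DepthLe G d
  | step {G l d} : IsPartsOf G l → (∀ H ∈ l, DepthLe H d) → DepthLe G (d + 1)

/-- `HasDepth G d`: the depth of `G` is exactly `d`, i.e. `d` is the least
upper bound in the recursive definition of depth. -/
def HasDepth (G : TTGraph) (d : ℕ) : Prop :=
  DepthLe G d ∧ ∀ d' < d, ¬ DepthLe G d'

/-- `G` is reduced: each non-terminal vertex has degree at least `3`, and
no two parallel edges have the same sign. -/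
def IsReducedGraph (G : TTGraph) : Prop :=
  (∀ v ∈ G.verts, v ≠ G.s → v ≠ G.t → 3 ≤ G.toSignedGraph.degree v) ∧
  (∀ e ∈ G.edges, ∀ f ∈ G.edges, G.toSignedGraph.Parallel e f → G.sign e ≠ G.sign f)

/-- `G` is a positive `K₂` (denoted `K₂⁺`). -/
def IsPositiveK2 (G : TTGraph) : Prop :=
  IsSignedK2 G ∧ ∀ e ∈ G.edges, G.sign e = true

/-- `G` is the unbalanced 2-cycle `D`: two parallel edges of opposite signs
joining the two terminals. -/
def IsUnbalanced2Cycle (G : TTGraph) : Prop :=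
  G.verts = {G.s, G.t} ∧ ∃ e f, e ≠ f ∧ G.edges = {e, f} ∧
    G.toSignedGraph.Joins e G.s G.t ∧ G.toSignedGraph.Joins f G.s G.t ∧
    G.sign e ≠ G.sign f

/-- `G` is a string: a copy of `K₂⁺` or `D`, or a series connection of copies
of `K₂⁺` and `D`, in which every non-terminal vertex lies in a 2-cycle. -/
def IsString (G : TTGraph) : Prop :=
  (IsPositiveK2 G ∨ IsUnbalanced2Cycle G ∨
    ∃ l, IsSeriesConnList G l ∧ ∀ H ∈ l, IsPositiveK2 H ∨ IsUnbalanced2Cycle H) ∧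
  ∀ v ∈ G.verts, v ≠ G.s → v ≠ G.t → G.toSignedGraph.In2Cycle v

/-- `G` is a necklace: a parallel connection of two strings, at least one of
which is nontrivial (has more than two vertices). -/
def IsNecklace (G : TTGraph) : Prop :=
  ∃ H₁ H₂, IsParallelConn2 G H₁ H₂ ∧ IsString H₁ ∧ IsString H₂ ∧
    (2 < H₁.verts.card ∨ 2 < H₂.verts.card)

/-- `(o₁, o₂, φ)` is an `(a,b)`-pseudoflow on the two-terminal signed graph
`G`: like a nowhere-zero 6-flow, except that at the source terminal the
outflow exceeds the inflow by `a`, and at the target terminal the inflow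
exceeds the outflow by `b`. -/
structure IsPseudoflow (G : TTGraph) (a b : ℤ) (o₁ o₂ : ℕ → Bool) (φ : ℕ → ℤ) :
    Prop where
  orient : G.toSignedGraph.IsOrientation o₁ o₂
  nonzero : ∀ e ∈ G.edges, φ e ≠ 0
  bounded : ∀ e ∈ G.edges, |φ e| < 6
  conserve : ∀ v ∈ G.verts, v ≠ G.s → v ≠ G.t →
    G.toSignedGraph.excess o₁ o₂ φ v = 0
  out_s : G.toSignedGraph.excess o₁ o₂ φ G.s = -a
  in_t : G.toSignedGraph.excess o₁ o₂ φ G.t = b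

/-- `G` admits an `(a,b)`-pseudoflow. -/
def HasPseudoflow (G : TTGraph) (a b : ℤ) : Prop :=
  ∃ o₁ o₂ φ, IsPseudoflow G a b o₁ o₂ φ

/-- `I₅ = {-5, …, 5}`. -/
noncomputable def I5 : Finset ℤ := Finset.Icc (-5) 5

/-- The pair `(a,b)` is valid for `G`: `a ≠ 0` or `deg(s) ≥ 2`, and
`b ≠ 0` or `deg(t) ≥ 2`. -/
def ValidPair (G : TTGraph) (a b : ℤ) : Prop :=
  (a ≠ 0 ∨ 2 ≤ G.toSignedGraph.degree G.s) ∧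
  (b ≠ 0 ∨ 2 ≤ G.toSignedGraph.degree G.t)

/-- `G` is a flow-admissible signed series-parallel graph with no
nowhere-zero 6-flow, with the minimum number of edges among all such
graphs. -/
def MinCounterexample (G : TTGraph) : Prop :=
  IsSP G ∧ G.toSignedGraph.FlowAdmissible ∧ ¬ G.toSignedGraph.HasNZFlow 6 ∧
  ∀ G' : TTGraph, IsSP G' → G'.toSignedGraph.FlowAdmissible →
    ¬ G'.toSignedGraph.HasNZFlow 6 → G.edges.card ≤ G'.edges.card

/-- `W` is a copy of `S(K₂⁺, D, K₂⁺)`. -/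
def IsSK2DK2 (W : TTGraph) : Prop :=
  ∃ A B C, IsSeriesConnList W [A, B, C] ∧ IsPositiveK2 A ∧
    IsUnbalanced2Cycle B ∧ IsPositiveK2 C

/-- `G'` is obtained from `G` by replacing the piece `H` (with terminals
`H.s`, `H.t`) by the two-terminal graph `W`: the edges and non-terminal
vertices of `H` are removed, `W` (whose new vertices are fresh) is added,
and its terminals are identified with the terminals of `H`. -/
def IsReplacement (G H G' W : TTGraph) : Prop :=
  W.s = H.s ∧ W.t = H.t ∧ G'.s = G.s ∧ G'.t = G.t ∧
  W.verts ∩ G.verts ⊆ {H.s, H.t} ∧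
  G'.verts = (G.verts \ (H.verts \ {H.s, H.t})) ∪ W.verts ∧
  G'.edges = (G.edges \ H.edges) ∪ W.edges ∧
  Disjoint (G.edges \ H.edges) W.edges ∧
  (∀ e ∈ G.edges \ H.edges,
    G'.fst e = G.fst e ∧ G'.snd e = G.snd e ∧ G'.sign e = G.sign e) ∧
  SignedGraph.IsSubgraph W.toSignedGraph G'.toSignedGraph


/-!
Write `G = S(X, Y)` with `X` (or `Y`) the endpart. By induction on the series-parallel
structure, a balanced two-terminal graph has an `s`–`t` path with `n` negative edges such
that every flow conserved at its non-terminal vertices satisfies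
`excess s + (-1) ^ n * excess t = 0`; in a parallel connection, parts whose paths have
different parities would give an unbalanced cycle. Hence if an endpart were balanced, a
nowhere-zero flow on `G` would carry no net flow through the cut vertex `X.t` and would split
into flows on `X` and `Y`. By minimality both have nowhere-zero 6-flows, and together these
form one on `G`.
-/

lemma List.getD_mem_of_lt {l : List ℕ} {i : ℕ} (hi : i < l.length) : l.getD i 0 ∈ l :=
  List.getD_eq_getElem l 0 hi ▸ List.getElem_mem hi

namespace SignedGraph

variable {G H K H₁ H₂ : SignedGraph} {o₁ o₂ : ℕ → Bool} {φ : ℕ → ℤ} {k : ℕ} {vs es : List ℕ}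

lemma excess_eq_zero_of_notMem {v : ℕ} (hv : v ∉ G.verts) : G.excess o₁ o₂ φ v = 0 :=
  Finset.sum_eq_zero fun e he => by
    rw [if_neg fun h : G.fst e = v => hv (h ▸ G.fst_mem e he),
      if_neg fun h : G.snd e = v => hv (h ▸ G.snd_mem e he), add_zero]

lemma negCount_append (G : SignedGraph) (a b : List ℕ) :
    G.negCount (a ++ b) = G.negCount a + G.negCount b := by
  simp only [negCount, List.filter_append, List.length_append]

lemma negCount_reverse (G : SignedGraph) (a : List ℕ) : G.negCount a.reverse = G.negCount a := by
  simp only [negCount, List.filter_reverse, List.length_reverse]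

lemma IsOrientation.dirVal_add_neg_one_pow_mul
    (ho : H.IsOrientation o₁ o₂) {e : ℕ} (he : e ∈ H.edges) :
    dirVal (o₁ e) + (-1) ^ H.negCount [e] * dirVal (o₂ e) = 0 ∧
      dirVal (o₂ e) + (-1) ^ H.negCount [e] * dirVal (o₁ e) = 0 := by
  have := ho e he
  cases hs : H.sign e <;> cases h₁ : o₁ e <;> cases h₂ : o₂ e <;>
    simp_all [negCount, dirVal]

def Links (G : SignedGraph) (vs es : List ℕ) : Prop :=
  ∀ i < es.length, G.Joins (es.getD i 0) (vs.getD i 0) (vs.getD (i + 1) 0)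

namespace IsSubgraph

lemma trans (h₁ : H.IsSubgraph K) (h₂ : K.IsSubgraph G) : H.IsSubgraph G :=
  ⟨h₁.1.trans h₂.1, h₁.2.1.trans h₂.2.1, fun e he =>
    have h := h₂.2.2 e (h₁.2.1 he)
    ⟨(h₁.2.2 e he).1.trans h.1, (h₁.2.2 e he).2.1.trans h.2.1, (h₁.2.2 e he).2.2.trans h.2.2⟩⟩

lemma isOrientation (hs : H.IsSubgraph G) (h : G.IsOrientation o₁ o₂) :
    H.IsOrientation o₁ o₂ := fun e he => (hs.2.2 e he).2.2 ▸ h e (hs.2.1 he)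

lemma negCount_eq (hs : H.IsSubgraph G) (h : ∀ e ∈ es, e ∈ H.edges) :
    G.negCount es = H.negCount es := by
  unfold negCount
  congr 1
  exact List.filter_congr fun e he => by rw [(hs.2.2 e (h e he)).2.2]

lemma joins (hs : H.IsSubgraph G) {e u v : ℕ} (he : e ∈ H.edges) (h : H.Joins e u v) :
    G.Joins e u v := by
  unfold Joins
  rwa [← (hs.2.2 e he).1, ← (hs.2.2 e he).2.1]

lemma links (hs : H.IsSubgraph G) (h : H.Links vs es) (he : ∀ e ∈ es, e ∈ H.edges) :
    G.Links vs es :=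
  fun i hi => hs.joins (he _ (List.getD_mem_of_lt hi)) (h i hi)

lemma isPath (hs : H.IsSubgraph G) (p : H.IsPath vs es) : G.IsPath vs es :=
  ⟨p.nonempty, p.len, p.vnodup, p.enodup, fun v hv => hs.1 (p.vmem v hv),
    fun e he => hs.2.1 (p.emem e he), hs.links p.link p.emem⟩

lemma isUnbalanced (hs : H.IsSubgraph G) (h : H.IsUnbalanced) : G.IsUnbalanced := by
  obtain ⟨vs, es, c, hodd⟩ := h
  refine ⟨vs, es, ⟨c.nonempty, c.len, c.vnodup, c.enodup, fun v hv => hs.1 (c.vmem v hv),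
    fun e he => hs.2.1 (c.emem e he),
    fun i hi => hs.joins (c.emem _ (List.getD_mem_of_lt hi)) (c.link i hi)⟩,
    hs.negCount_eq c.emem ▸ hodd⟩

end IsSubgraph

lemma IsNZFlow.excess_eq_zero (hf : G.IsNZFlow k o₁ o₂ φ) (v : ℕ) : G.excess o₁ o₂ φ v = 0 := by
  by_cases hv : v ∈ G.verts
  exacts [hf.conserve v hv, excess_eq_zero_of_notMem hv]

lemma IsNZFlow.congr {o₁' o₂' : ℕ → Bool} {φ' : ℕ → ℤ} (hf : G.IsNZFlow k o₁ o₂ φ)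
    (h : ∀ e ∈ G.edges, o₁' e = o₁ e ∧ o₂' e = o₂ e ∧ φ' e = φ e) : G.IsNZFlow k o₁' o₂' φ' where
  orient e he := by rw [(h e he).1, (h e he).2.1]; exact hf.orient e he
  nonzero e he := (h e he).2.2 ▸ hf.nonzero e he
  bounded e he := (h e he).2.2 ▸ hf.bounded e he
  conserve v hv := by
    rw [← hf.conserve v hv]
    exact Finset.sum_congr rfl fun e he => by rw [(h e he).1, (h e he).2.1, (h e he).2.2]

lemma IsNZFlow.restrict (hs : H.IsSubgraph G) (hf : G.IsNZFlow k o₁ o₂ φ)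
    (hc : ∀ v ∈ H.verts, H.excess o₁ o₂ φ v = 0) : H.IsNZFlow k o₁ o₂ φ :=
  ⟨hs.isOrientation hf.orient, fun e he => hf.nonzero e (hs.2.1 he),
    fun e he => hf.bounded e (hs.2.1 he), hc⟩

structure IsEdgeSplit (G H₁ H₂ : SignedGraph) : Prop where
  sub₁ : H₁.IsSubgraph G
  sub₂ : H₂.IsSubgraph G
  edge_union : H₁.edges ∪ H₂.edges = G.edges
  edge_disj : Disjoint H₁.edges H₂.edges

namespace IsEdgeSplit

lemma excess_eq_add (h : G.IsEdgeSplit H₁ H₂) (v : ℕ) :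
    G.excess o₁ o₂ φ v = H₁.excess o₁ o₂ φ v + H₂.excess o₁ o₂ φ v := by
  unfold excess
  rw [← h.edge_union, Finset.sum_union h.edge_disj]
  congr 1
  · exact Finset.sum_congr rfl fun e he => by rw [(h.sub₁.2.2 e he).1, (h.sub₁.2.2 e he).2.1]
  · exact Finset.sum_congr rfl fun e he => by rw [(h.sub₂.2.2 e he).1, (h.sub₂.2.2 e he).2.1]

lemma excess_eq_left (h : G.IsEdgeSplit H₁ H₂) {v : ℕ} (hv : v ∉ H₂.verts) :
    G.excess o₁ o₂ φ v = H₁.excess o₁ o₂ φ v := by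
  rw [h.excess_eq_add, excess_eq_zero_of_notMem hv, add_zero]

lemma excess_eq_right (h : G.IsEdgeSplit H₁ H₂) {v : ℕ} (hv : v ∉ H₁.verts) :
    G.excess o₁ o₂ φ v = H₂.excess o₁ o₂ φ v := by
  rw [h.excess_eq_add, excess_eq_zero_of_notMem hv, zero_add]

lemma isNZFlow (h : G.IsEdgeSplit H₁ H₂) (h₁ : H₁.IsNZFlow k o₁ o₂ φ)
    (h₂ : H₂.IsNZFlow k o₁ o₂ φ) : G.IsNZFlow k o₁ o₂ φ := by
  have of_parts {P : ℕ → Prop} (p₁ : ∀ e ∈ H₁.edges, P e) (p₂ : ∀ e ∈ H₂.edges, P e) :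
      ∀ e ∈ G.edges, P e := by
    intro e he
    rcases Finset.mem_union.mp (h.edge_union ▸ he) with he | he
    exacts [p₁ e he, p₂ e he]
  refine ⟨of_parts (fun e he => ?_) (fun e he => ?_), of_parts h₁.nonzero h₂.nonzero,
    of_parts h₁.bounded h₂.bounded, fun v _ => ?_⟩
  · exact (h.sub₁.2.2 e he).2.2 ▸ h₁.orient e he
  · exact (h.sub₂.2.2 e he).2.2 ▸ h₂.orient e he
  · rw [h.excess_eq_add, h₁.excess_eq_zero, h₂.excess_eq_zero, add_zero]

lemma hasNZFlow (h : G.IsEdgeSplit H₁ H₂) (h₁ : H₁.HasNZFlow k) (h₂ : H₂.HasNZFlow k) :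
    G.HasNZFlow k := by
  classical
  obtain ⟨a₁, a₂, α, ha⟩ := h₁
  obtain ⟨b₁, b₂, β, hb⟩ := h₂
  let pick {γ : Type} (x y : ℕ → γ) (e : ℕ) : γ := if e ∈ H₁.edges then x e else y e
  refine ⟨pick a₁ b₁, pick a₂ b₂, pick α β, h.isNZFlow (ha.congr fun e he => ?_)
    (hb.congr fun e he => ?_)⟩
  · simp only [pick, if_pos he, and_self]
  · simp only [pick, if_neg (Finset.disjoint_right.mp h.edge_disj he), and_self]

end IsEdgeSplit

lemma IsPath.links (p : G.IsPath vs es) : G.Links vs es := p.link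

lemma Links.append {l r es₁ es₂ : List ℕ} {c : ℕ} (h₁ : G.Links (l ++ [c]) es₁)
    (h₂ : G.Links (c :: r) es₂) (hl : l.length = es₁.length) :
    G.Links (l ++ c :: r) (es₁ ++ es₂) := by
  intro i hi
  rw [List.length_append] at hi
  rcases lt_or_ge i es₁.length with hi₁ | hi₁
  · have hv (j : ℕ) (hj : j ≤ l.length) : (l ++ c :: r).getD j 0 = (l ++ [c]).getD j 0 := by
      rcases hj.lt_or_eq with hj | rfl
      · rw [List.getD_append _ _ _ _ hj, List.getD_append _ _ _ _ hj]
      · simp only [List.getD_append_right _ _ _ _ le_rfl, Nat.sub_self, List.getD_cons_zero]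
    rw [List.getD_append _ _ _ _ hi₁, hv i (by omega), hv (i + 1) (by omega)]
    exact h₁ i hi₁
  · rw [List.getD_append_right _ _ _ _ hi₁,
      List.getD_append_right _ _ _ _ (by omega : l.length ≤ i),
      List.getD_append_right _ _ _ _ (by omega : l.length ≤ i + 1),
      show i + 1 - l.length = i - es₁.length + 1 by omega, hl]
    exact h₂ _ (by omega)

lemma Links.reverse (h : G.Links vs es) (hl : vs.length = es.length + 1) :
    G.Links vs.reverse es.reverse := by
  intro i hi
  rw [List.length_reverse] at hi
  rw [List.getD_reverse i hi, List.getD_reverse i (by omega), List.getD_reverse (i + 1) (by omega)]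
  rw [show vs.length - 1 - i = es.length - 1 - i + 1 by omega,
    show vs.length - 1 - (i + 1) = es.length - 1 - i by omega]
  exact (h (es.length - 1 - i) (by omega)).symm

lemma isCycle_of_links {v : ℕ} {l : List ℕ} (hlink : G.Links (v :: l ++ [v]) es)
    (hlen : es.length = l.length + 1) (hvnd : (v :: l).Nodup) (hend : es.Nodup)
    (hv : ∀ u ∈ v :: l, u ∈ G.verts) (he : ∀ e ∈ es, e ∈ G.edges) : G.IsCycle (v :: l) es := by
  refine ⟨?_, by simp [hlen], hvnd, hend, hv, he, fun i hi => ?_⟩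
  · rintro rfl
    simp at hlen
  · have h0 : (v :: l).getD i 0 = (v :: l ++ [v]).getD i 0 :=
      (List.getD_append _ _ _ _ (by simp; omega)).symm
    have h1 : (v :: l).getD ((i + 1) % (v :: l).length) 0 = (v :: l ++ [v]).getD (i + 1) 0 := by
      rcases (by simp; omega : i + 1 < (v :: l).length ∨ i + 1 = (v :: l).length) with h | h
      · rw [Nat.mod_eq_of_lt h, List.getD_append _ _ _ _ h]
      · rw [h, Nat.mod_self, List.getD_append_right _ _ _ _ le_rfl, Nat.sub_self]
        rfl
    rw [h0, h1]
    exact hlink i hi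

lemma IsPath.append {l r es₁ es₂ : List ℕ} {c : ℕ} (p₁ : G.IsPath (l ++ [c]) es₁)
    (p₂ : G.IsPath (c :: r) es₂) (hv : ∀ v ∈ l, v ∉ c :: r) (he : ∀ e ∈ es₁, e ∉ es₂) :
    G.IsPath (l ++ c :: r) (es₁ ++ es₂) := by
  have hl₁ := p₁.len
  have hl₂ := p₂.len
  simp only [List.length_append, List.length_cons, List.length_nil] at hl₁ hl₂
  refine ⟨by simp, by simp; omega, ?_, List.nodup_append.mpr ⟨p₁.enodup, p₂.enodup,
    fun a ha b hb hab => he a ha (hab ▸ hb)⟩, fun v hv => ?_, fun e he => ?_,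
    p₁.links.append p₂.links (by omega)⟩
  · exact List.nodup_append.mpr ⟨(List.nodup_append.mp p₁.vnodup).1, p₂.vnodup,
      fun a ha b hb hab => hv a ha (hab ▸ hb)⟩
  · rcases List.mem_append.mp hv with hv | hv
    exacts [p₁.vmem v (List.mem_append_left _ hv), p₂.vmem v hv]
  · rcases List.mem_append.mp he with he | he
    exacts [p₁.emem e he, p₂.emem e he]

lemma isUnbalanced_of_paths {s t : ℕ} {m₁ m₂ es₁ es₂ : List ℕ}
    (p₁ : G.IsPath (s :: m₁ ++ [t]) es₁) (p₂ : G.IsPath (s :: m₂ ++ [t]) es₂)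
    (hv : ∀ v ∈ m₁, v ∉ m₂) (he : ∀ e ∈ es₁, e ∉ es₂)
    (hodd : Odd (G.negCount es₁ + G.negCount es₂)) : G.IsUnbalanced := by
  have hl₁ := p₁.len
  have hl₂ := p₂.len
  simp only [List.length_append, List.length_cons, List.length_nil] at hl₁ hl₂
  have hlink : G.Links (s :: (m₁ ++ t :: m₂.reverse) ++ [s]) (es₁ ++ es₂.reverse) := by
    have h₂ := p₂.links.reverse p₂.len
    simp only [List.cons_append, List.reverse_cons, List.reverse_append, List.reverse_nil,
      List.nil_append] at h₂
    simpa using p₁.links.append h₂ (by simp; omega)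
  have hnd₁ := p₁.vnodup
  have hnd₂ := p₂.vnodup
  simp only [List.cons_append, List.nodup_cons, List.mem_append, List.mem_cons,
    List.not_mem_nil, List.nodup_append] at hnd₁ hnd₂
  refine ⟨_, _, isCycle_of_links hlink (by simp; omega) ?_ ?_ ?_ ?_, ?_⟩
  · simp only [List.nodup_cons, List.mem_append, List.mem_cons, List.mem_reverse,
      List.nodup_append, List.nodup_reverse]
    grind
  · exact List.nodup_append.mpr ⟨p₁.enodup, List.nodup_reverse.mpr p₂.enodup,
      fun a ha b hb hab => he a ha (List.mem_reverse.mp (hab ▸ hb))⟩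
  · intro u hu
    simp only [List.mem_cons, List.mem_append, List.mem_reverse] at hu
    rcases hu with rfl | hu | rfl | hu
    · exact p₁.vmem _ (by simp)
    · exact p₁.vmem _ (by simp [hu])
    · exact p₁.vmem _ (by simp)
    · exact p₂.vmem _ (by simp [hu])
  · intro e he
    rcases List.mem_append.mp he with he | he
    exacts [p₁.emem e he, p₂.emem e (List.mem_reverse.mp he)]
  · rwa [negCount_append, negCount_reverse]

end SignedGraph

namespace TTGraph

def IsInteriorConserving (H : TTGraph) (o₁ o₂ : ℕ → Bool) (φ : ℕ → ℤ) : Prop :=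
  ∀ v ∈ H.verts, v ≠ H.s → v ≠ H.t → H.excess o₁ o₂ φ v = 0

/-- For balanced series-parallel graphs this holds with `n` the number of negative edges of
an `s`–`t` path. -/
def TerminalExcessRel (H : TTGraph) (n : ℕ) : Prop :=
  ∀ o₁ o₂ φ, H.IsOrientation o₁ o₂ → H.IsInteriorConserving o₁ o₂ φ →
    H.excess o₁ o₂ φ H.s + (-1) ^ n * H.excess o₁ o₂ φ H.t = 0

def HasTerminalPath (H : TTGraph) (n : ℕ) : Prop :=
  ∃ mid es, H.IsPath (H.s :: mid ++ [H.t]) es ∧ H.negCount es = n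

end TTGraph

namespace IsSeriesConn2

variable {G X Y : TTGraph} {o₁ o₂ : ℕ → Bool} {φ : ℕ → ℤ}

lemma toIsEdgeSplit (h : IsSeriesConn2 G X Y) : G.IsEdgeSplit X.toSignedGraph Y.toSignedGraph :=
  ⟨h.sub1, h.sub2, h.edge_union, h.edge_disj⟩

lemma eq_mid_of_mem (h : IsSeriesConn2 G X Y) {v : ℕ} (hX : v ∈ X.verts) (hY : v ∈ Y.verts) :
    v = X.t := by
  simpa [h.vert_inter] using Finset.mem_inter.mpr ⟨hX, hY⟩

lemma source_notMem (h : IsSeriesConn2 G X Y) : G.s ∉ Y.verts := fun hY =>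
  X.s_ne_t (h.eq_mid_of_mem (h.src ▸ X.s_mem) (h.src ▸ hY))

lemma target_notMem (h : IsSeriesConn2 G X Y) : G.t ∉ X.verts := fun hX =>
  Y.s_ne_t (h.mid ▸ (h.eq_mid_of_mem (h.tgt ▸ hX) (h.tgt ▸ Y.t_mem)).symm)

lemma excess_source (h : IsSeriesConn2 G X Y) : G.excess o₁ o₂ φ G.s = X.excess o₁ o₂ φ X.s := by
  rw [h.toIsEdgeSplit.excess_eq_left h.source_notMem, h.src]

lemma excess_target (h : IsSeriesConn2 G X Y) : G.excess o₁ o₂ φ G.t = Y.excess o₁ o₂ φ Y.t := by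
  rw [h.toIsEdgeSplit.excess_eq_right h.target_notMem, h.tgt]

lemma excess_mid (h : IsSeriesConn2 G X Y) :
    G.excess o₁ o₂ φ X.t = X.excess o₁ o₂ φ X.t + Y.excess o₁ o₂ φ Y.s := by
  rw [h.toIsEdgeSplit.excess_eq_add, h.mid]

lemma isInteriorConserving_left (h : IsSeriesConn2 G X Y) (hc : G.IsInteriorConserving o₁ o₂ φ) :
    X.IsInteriorConserving o₁ o₂ φ := fun v hv hs ht => by
  rw [← h.toIsEdgeSplit.excess_eq_left fun hY => ht (h.eq_mid_of_mem hv hY)]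
  exact hc v (h.sub1.1 hv) (h.src ▸ hs) fun hG => h.target_notMem (hG ▸ hv)

lemma isInteriorConserving_right (h : IsSeriesConn2 G X Y) (hc : G.IsInteriorConserving o₁ o₂ φ) :
    Y.IsInteriorConserving o₁ o₂ φ := fun v hv hs ht => by
  rw [← h.toIsEdgeSplit.excess_eq_right fun hX => hs (h.mid ▸ h.eq_mid_of_mem hX hv)]
  exact hc v (h.sub2.1 hv) (fun hG => h.source_notMem (hG ▸ hv)) (h.tgt ▸ ht)

lemma isInteriorConserving_mid (h : IsSeriesConn2 G X Y) (hc : G.IsInteriorConserving o₁ o₂ φ) :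
    G.excess o₁ o₂ φ X.t = 0 :=
  hc X.t (h.sub1.1 X.t_mem) (h.src ▸ X.s_ne_t.symm) (h.tgt ▸ h.mid ▸ Y.s_ne_t)

end IsSeriesConn2

namespace IsParallelConn2

variable {G X Y : TTGraph} {o₁ o₂ : ℕ → Bool} {φ : ℕ → ℤ}

lemma toIsEdgeSplit (h : IsParallelConn2 G X Y) : G.IsEdgeSplit X.toSignedGraph Y.toSignedGraph :=
  ⟨h.sub1, h.sub2, h.edge_union, h.edge_disj⟩

lemma eq_terminal_of_mem (h : IsParallelConn2 G X Y) {v : ℕ} (hX : v ∈ X.verts)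
    (hY : v ∈ Y.verts) : v = X.s ∨ v = X.t := by
  simpa [h.vert_inter] using Finset.mem_inter.mpr ⟨hX, hY⟩

lemma isInteriorConserving_left (h : IsParallelConn2 G X Y) (hc : G.IsInteriorConserving o₁ o₂ φ) :
    X.IsInteriorConserving o₁ o₂ φ := fun v hv hs ht => by
  rw [← h.toIsEdgeSplit.excess_eq_left fun hY => (h.eq_terminal_of_mem hv hY).elim hs ht]
  exact hc v (h.sub1.1 hv) (h.src ▸ hs) (h.tgt ▸ ht)

lemma isInteriorConserving_right (h : IsParallelConn2 G X Y) (hc : G.IsInteriorConserving o₁ o₂ φ) :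
    Y.IsInteriorConserving o₁ o₂ φ := fun v hv hs ht => by
  rw [← h.toIsEdgeSplit.excess_eq_right fun hX =>
    (h.eq_terminal_of_mem hX hv).elim (fun e => hs (h.src_eq ▸ e)) fun e => ht (h.tgt_eq ▸ e)]
  exact hc v (h.sub2.1 hv) (by rwa [h.src, h.src_eq]) (by rwa [h.tgt, h.tgt_eq])

lemma isUnbalanced_of_odd {n₁ n₂ : ℕ} (h : IsParallelConn2 G X Y)
    (p₁ : X.HasTerminalPath n₁) (p₂ : Y.HasTerminalPath n₂) (hodd : Odd (n₁ + n₂)) :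
    G.IsUnbalanced := by
  obtain ⟨m₁, es₁, p₁, rfl⟩ := p₁
  obtain ⟨m₂, es₂, p₂, rfl⟩ := p₂
  have q₂ := h.sub2.isPath p₂
  rw [← h.src_eq, ← h.tgt_eq] at q₂
  refine SignedGraph.isUnbalanced_of_paths (h.sub1.isPath p₁) q₂ (fun v hv₁ hv₂ => ?_)
    (fun e he₁ he₂ => Finset.disjoint_left.mp h.edge_disj (p₁.emem e he₁) (p₂.emem e he₂)) ?_
  · have hnd := p₁.vnodup
    simp only [List.cons_append, List.nodup_cons, List.mem_append, List.nodup_append] at hnd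
    rcases h.eq_terminal_of_mem (p₁.vmem v (by simp [hv₁])) (p₂.vmem v (by simp [hv₂])) with
      rfl | rfl
    · exact hnd.1 (Or.inl hv₁)
    · exact hnd.2.2.2 _ hv₁ _ (List.mem_singleton_self _) rfl
  · rwa [h.sub1.negCount_eq p₁.emem, h.sub2.negCount_eq p₂.emem]

end IsParallelConn2

namespace TTGraph

open SignedGraph

variable {G X Y H : TTGraph} {n₁ n₂ : ℕ}

lemma terminalExcessRel_of_edges_eq_singleton {e : ℕ} (hE : H.edges = {e})
    (hJ : H.Joins e H.s H.t) : H.TerminalExcessRel (H.negCount [e]) := by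
  intro o₁ o₂ φ ho _
  have hdir := ho.dirVal_add_neg_one_pow_mul (hE ▸ Finset.mem_singleton_self e)
  simp only [excess, hE, Finset.sum_singleton]
  rcases hJ with ⟨h₁, h₂⟩ | ⟨h₁, h₂⟩
  · simp only [h₁, h₂, H.s_ne_t, H.s_ne_t.symm, if_true, if_false, add_zero, zero_add]
    linear_combination φ e * hdir.1
  · simp only [h₁, h₂, H.s_ne_t, H.s_ne_t.symm, if_true, if_false, add_zero, zero_add]
    linear_combination φ e * hdir.2

lemma hasTerminalPath_of_edges_eq_singleton {e : ℕ} (hV : H.verts = {H.s, H.t})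
    (hE : H.edges = {e}) (hJ : H.Joins e H.s H.t) : H.HasTerminalPath (H.negCount [e]) := by
  refine ⟨[], [e], ⟨by simp, rfl, by simp [H.s_ne_t], by simp, ?_, ?_, ?_⟩, rfl⟩
  · simp [hV]
  · simp [hE]
  · intro i hi
    obtain rfl : i = 0 := by simpa using hi
    exact hJ

lemma TerminalExcessRel.series (h : IsSeriesConn2 G X Y) (r₁ : X.TerminalExcessRel n₁)
    (r₂ : Y.TerminalExcessRel n₂) : G.TerminalExcessRel (n₁ + n₂) := by
  intro o₁ o₂ φ ho hc
  have e₁ := r₁ o₁ o₂ φ (h.sub1.isOrientation ho) (h.isInteriorConserving_left hc)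
  have e₂ := r₂ o₁ o₂ φ (h.sub2.isOrientation ho) (h.isInteriorConserving_right hc)
  have hmid := h.excess_mid (o₁ := o₁) (o₂ := o₂) (φ := φ)
  rw [h.isInteriorConserving_mid hc] at hmid
  rw [h.excess_source, h.excess_target, pow_add]
  linear_combination e₁ + (-1) ^ n₁ * hmid + (-1) ^ n₁ * e₂

lemma TerminalExcessRel.parallel (h : IsParallelConn2 G X Y) (r₁ : X.TerminalExcessRel n₁)
    (r₂ : Y.TerminalExcessRel n₂) (heven : Even (n₁ + n₂)) : G.TerminalExcessRel n₁ := by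
  intro o₁ o₂ φ ho hc
  have e₁ := r₁ o₁ o₂ φ (h.sub1.isOrientation ho) (h.isInteriorConserving_left hc)
  have e₂ := r₂ o₁ o₂ φ (h.sub2.isOrientation ho) (h.isInteriorConserving_right hc)
  have hσ : (-1 : ℤ) ^ n₂ = (-1) ^ n₁ := by
    obtain ⟨k, hk⟩ := heven
    rw [neg_one_pow_eq_pow_mod_two, neg_one_pow_eq_pow_mod_two (n := n₁)]
    congr 1
    omega
  rw [hσ, ← h.src_eq, ← h.tgt_eq] at e₂
  rw [h.toIsEdgeSplit.excess_eq_add, h.toIsEdgeSplit.excess_eq_add, h.src, h.tgt]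
  linear_combination e₁ + e₂

lemma HasTerminalPath.series (h : IsSeriesConn2 G X Y) (p₁ : X.HasTerminalPath n₁)
    (p₂ : Y.HasTerminalPath n₂) : G.HasTerminalPath (n₁ + n₂) := by
  obtain ⟨m₁, es₁, p₁, rfl⟩ := p₁
  obtain ⟨m₂, es₂, p₂, rfl⟩ := p₂
  have q₂ := h.sub2.isPath p₂
  rw [← h.mid, List.cons_append] at q₂
  refine ⟨m₁ ++ X.t :: m₂, es₁ ++ es₂, ?_, ?_⟩
  · have hv : ∀ v ∈ X.s :: m₁, v ∉ X.t :: (m₂ ++ [Y.t]) := by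
      intro v hv₁ hv₂
      refine (List.nodup_append.mp p₁.vnodup).2.2 v hv₁ X.t (List.mem_singleton_self _) ?_
      exact h.eq_mid_of_mem (p₁.vmem v (List.mem_append_left _ hv₁))
        (p₂.vmem v (by simpa [← h.mid] using hv₂))
    have he : ∀ e ∈ es₁, e ∉ es₂ := fun e he₁ he₂ =>
      Finset.disjoint_left.mp h.edge_disj (p₁.emem e he₁) (p₂.emem e he₂)
    simpa [h.src, h.tgt] using (h.sub1.isPath p₁).append q₂ hv he
  · rw [negCount_append, h.sub1.negCount_eq p₁.emem, h.sub2.negCount_eq p₂.emem]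

lemma HasTerminalPath.of_isSubgraph (hs : X.IsSubgraph G.toSignedGraph) (hs' : X.s = G.s)
    (ht : X.t = G.t) (p : X.HasTerminalPath n₁) : G.HasTerminalPath n₁ := by
  obtain ⟨m, es, p, rfl⟩ := p
  exact ⟨m, es, hs' ▸ ht ▸ hs.isPath p, hs.negCount_eq p.emem⟩

end TTGraph

open TTGraph

theorem IsSP.isUnbalanced_or_exists_terminal {H : TTGraph} (hH : IsSP H) :
    H.IsUnbalanced ∨ ∃ n, H.TerminalExcessRel n ∧ H.HasTerminalPath n := by
  induction hH with
  | k2 hK =>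
    obtain ⟨hV, e, hE, hJ⟩ := hK
    exact .inr ⟨_, terminalExcessRel_of_edges_eq_singleton hE hJ,
      hasTerminalPath_of_edges_eq_singleton hV hE hJ⟩
  | series h _ _ ih₁ ih₂ =>
    rcases ih₁ with hu | ⟨n₁, r₁, p₁⟩
    · exact .inl (h.sub1.isUnbalanced hu)
    rcases ih₂ with hu | ⟨n₂, r₂, p₂⟩
    · exact .inl (h.sub2.isUnbalanced hu)
    exact .inr ⟨n₁ + n₂, r₁.series h r₂, p₁.series h p₂⟩
  | parallel h _ _ ih₁ ih₂ =>
    rcases ih₁ with hu | ⟨n₁, r₁, p₁⟩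
    · exact .inl (h.sub1.isUnbalanced hu)
    rcases ih₂ with hu | ⟨n₂, r₂, p₂⟩
    · exact .inl (h.sub2.isUnbalanced hu)
    rcases Nat.even_or_odd (n₁ + n₂) with heven | hodd
    · exact .inr ⟨n₁, r₁.parallel h r₂ heven, p₁.of_isSubgraph h.sub1 h.src.symm h.tgt.symm⟩
    · exact .inl (h.isUnbalanced_of_odd p₁ p₂ hodd)

lemma IsSP.edges_nonempty {H : TTGraph} (h : IsSP H) : H.edges.Nonempty := by
  induction h with
  | k2 hK =>
    obtain ⟨-, e, he, -⟩ := hK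
    exact ⟨e, he ▸ Finset.mem_singleton_self e⟩
  | series h _ _ ih => exact h.edge_union ▸ ih.mono Finset.subset_union_left
  | parallel h _ _ ih => exact h.edge_union ▸ ih.mono Finset.subset_union_left

namespace TTGraph

/-- The series connection of `K` and `L` on the union of their vertices and edges; it is
`S(K, L)` when `K.t = L.s` is their only common vertex and they share no edge. -/
def seriesGlue (K L : TTGraph) (h : K.s ≠ L.t) : TTGraph where
  verts := K.verts ∪ L.verts
  edges := K.edges ∪ L.edges
  fst e := if e ∈ K.edges then K.fst e else L.fst e
  snd e := if e ∈ K.edges then K.snd e else L.snd e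
  sign e := if e ∈ K.edges then K.sign e else L.sign e
  fst_mem e he := by
    split_ifs with hK
    · exact Finset.mem_union_left _ (K.fst_mem e hK)
    · exact Finset.mem_union_right _ (L.fst_mem e ((Finset.mem_union.mp he).resolve_left hK))
  snd_mem e he := by
    split_ifs with hK
    · exact Finset.mem_union_left _ (K.snd_mem e hK)
    · exact Finset.mem_union_right _ (L.snd_mem e ((Finset.mem_union.mp he).resolve_left hK))
  s := K.s
  t := L.t
  s_mem := Finset.mem_union_left _ K.s_mem
  t_mem := Finset.mem_union_right _ L.t_mem
  s_ne_t := h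

variable {G K L : TTGraph}

lemma seriesGlue_isSubgraph (h : K.s ≠ L.t) (hK : K.IsSubgraph G.toSignedGraph)
    (hL : L.IsSubgraph G.toSignedGraph) : (K.seriesGlue L h).IsSubgraph G.toSignedGraph := by
  refine ⟨Finset.union_subset hK.1 hL.1, Finset.union_subset hK.2.1 hL.2.1, fun e he => ?_⟩
  by_cases heK : e ∈ K.edges
  · simp only [seriesGlue, if_pos heK]
    exact hK.2.2 e heK
  · simp only [seriesGlue, if_neg heK]
    exact hL.2.2 e ((Finset.mem_union.mp he).resolve_left heK)

lemma isSeriesConn2_seriesGlue (h : K.s ≠ L.t) (hv : K.verts ∩ L.verts = {K.t})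
    (hm : K.t = L.s) (hd : Disjoint K.edges L.edges) : IsSeriesConn2 (K.seriesGlue L h) K L where
  sub1 := ⟨Finset.subset_union_left, Finset.subset_union_left,
    fun e he => by simp only [seriesGlue, if_pos he, and_self]⟩
  sub2 := ⟨Finset.subset_union_right, Finset.subset_union_right,
    fun e he => by simp only [seriesGlue, if_neg (Finset.disjoint_right.mp hd he), and_self]⟩
  vert_union := rfl
  vert_inter := hv
  mid := hm
  edge_union := rfl
  edge_disj := hd
  src := rfl
  tgt := rfl

end TTGraph

lemma IsSeriesConn2.assoc {G K G' L H : TTGraph} (h₁ : IsSeriesConn2 G K G')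
    (h₂ : IsSeriesConn2 G' L H) : ∃ M, IsSeriesConn2 G M H ∧ IsSeriesConn2 M K L := by
  have hKL : K.verts ∩ L.verts = {K.t} := by
    ext v
    simp only [Finset.mem_inter, Finset.mem_singleton]
    constructor
    · exact fun ⟨hK, hL⟩ => h₁.eq_mid_of_mem hK (h₂.sub1.1 hL)
    · rintro rfl
      exact ⟨K.t_mem, h₁.mid ▸ h₂.src ▸ L.s_mem⟩
  have hne : K.s ≠ L.t := fun hst =>
    K.s_ne_t (h₁.eq_mid_of_mem K.s_mem (h₂.sub1.1 (hst ▸ L.t_mem)))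
  refine ⟨K.seriesGlue L hne, ⟨seriesGlue_isSubgraph hne h₁.sub1 (h₂.sub1.trans h₁.sub2),
    h₂.sub2.trans h₁.sub2, ?_, ?_, h₂.mid, ?_, ?_, h₁.src, h₁.tgt.trans h₂.tgt⟩,
    isSeriesConn2_seriesGlue hne hKL (h₁.mid.trans h₂.src)
      (h₁.edge_disj.mono_right h₂.sub1.2.1)⟩
  · show K.verts ∪ L.verts ∪ H.verts = G.verts
    rw [Finset.union_assoc, h₂.vert_union, h₁.vert_union]
  · show (K.verts ∪ L.verts) ∩ H.verts = {L.t}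
    ext v
    simp only [Finset.mem_inter, Finset.mem_union, Finset.mem_singleton]
    constructor
    · rintro ⟨hK | hL, hH⟩
      · have hv : v = L.s := (h₁.eq_mid_of_mem hK (h₂.sub2.1 hH)).trans (h₁.mid.trans h₂.src)
        exact h₂.eq_mid_of_mem (hv ▸ L.s_mem) hH
      · exact h₂.eq_mid_of_mem hL hH
    · rintro rfl
      exact ⟨Or.inr L.t_mem, h₂.mid ▸ H.s_mem⟩
  · show K.edges ∪ L.edges ∪ H.edges = G.edges
    rw [Finset.union_assoc, h₂.edge_union, h₁.edge_union]
  · exact Finset.disjoint_union_left.mpr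
      ⟨h₁.edge_disj.mono_right h₂.sub2.2.1, h₂.edge_disj⟩

lemma IsSeriesConnList.isSP {G : TTGraph} {l : List TTGraph} (h : IsSeriesConnList G l)
    (hs : ∀ H ∈ l, IsSP H) : IsSP G := by
  induction h with
  | two h => exact .series h (hs _ (by simp)) (hs _ (by simp))
  | cons h _ ih => exact .series h (hs _ (by simp)) (ih fun H hH => hs H (by simp [hH]))

lemma IsSeriesConnList.exists_isSeriesConn2_last {G H : TTGraph} {l : List TTGraph}
    (h : IsSeriesConnList G l) (hs : ∀ K ∈ l, IsSP K) (hH : l.getLast? = some H) :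
    ∃ L, IsSeriesConn2 G L H ∧ IsSP L := by
  induction h with
  | two h =>
    obtain rfl : _ = H := by simpa using hH
    exact ⟨_, h, hs _ (by simp)⟩
  | @cons G G' K l h hl ih =>
    have hne : l ≠ [] := by cases hl <;> simp
    obtain ⟨L', h', hL'⟩ := ih (fun K hK => hs K (by simp [hK])) (by
      rwa [List.getLast?_cons_of_ne_nil hne] at hH)
    obtain ⟨M, hM, hKL'⟩ := h.assoc h'
    exact ⟨M, hM, .series hKL' (hs K (by simp)) hL'⟩

lemma IsEndpartOf.exists_isSeriesConn2 {G H : TTGraph} (h : IsEndpartOf H G) :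
    IsSP H ∧ ∃ Y, IsSP Y ∧ (IsSeriesConn2 G H Y ∨ IsSeriesConn2 G Y H) := by
  obtain ⟨l, ⟨hl, hs, -⟩, hH | hH⟩ := h
  · obtain ⟨l', rfl⟩ := List.head?_eq_some_iff.mp hH
    refine ⟨hs H (by simp), ?_⟩
    cases hl with
    | two h => exact ⟨_, hs _ (by simp), .inl h⟩
    | cons h hl => exact ⟨_, hl.isSP fun K hK => hs K (by simp [hK]), .inl h⟩
  · obtain ⟨L, h, hL⟩ := hl.exists_isSeriesConn2_last hs hH
    exact ⟨hs H (List.mem_of_getLast? hH), L, hL, .inr h⟩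

section MinCounterexample

variable {G X Y : TTGraph} {k : ℕ} {o₁ o₂ : ℕ → Bool} {φ : ℕ → ℤ}

lemma IsSeriesConn2.isNZFlow_of_excess_mid (h : IsSeriesConn2 G X Y)
    (hf : G.IsNZFlow k o₁ o₂ φ) (h0 : X.excess o₁ o₂ φ X.t = 0) :
    X.IsNZFlow k o₁ o₂ φ ∧ Y.IsNZFlow k o₁ o₂ φ := by
  refine ⟨hf.restrict h.sub1 fun v hv => ?_, hf.restrict h.sub2 fun v hv => ?_⟩
  · by_cases hvt : v = X.t
    · rwa [hvt]
    · rw [← h.toIsEdgeSplit.excess_eq_left fun hY => hvt (h.eq_mid_of_mem hv hY)]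
      exact hf.excess_eq_zero v
  · by_cases hvs : v = Y.s
    · have hmid := h.excess_mid (o₁ := o₁) (o₂ := o₂) (φ := φ)
      rwa [hf.excess_eq_zero, h0, zero_add, eq_comm, ← hvs] at hmid
    · rw [← h.toIsEdgeSplit.excess_eq_right fun hX => hvs (h.mid ▸ h.eq_mid_of_mem hX hv)]
      exact hf.excess_eq_zero v

/-- Otherwise both parts would be smaller flow-admissible series-parallel graphs, hence have
nowhere-zero 6-flows, which combine to one on `G`. -/
lemma MinCounterexample.excess_mid_ne_zero (hmin : MinCounterexample G)
    (h : IsSeriesConn2 G X Y) (hX : IsSP X) (hY : IsSP Y) (hf : G.IsNZFlow k o₁ o₂ φ) :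
    X.excess o₁ o₂ φ X.t ≠ 0 := by
  intro h0
  obtain ⟨fX, fY⟩ := h.isNZFlow_of_excess_mid hf h0
  have hcard : G.edges.card = X.edges.card + Y.edges.card := by
    rw [← h.edge_union]
    exact Finset.card_union_of_disjoint h.edge_disj
  have hasNZFlow_six {Z : TTGraph} (hZ : IsSP Z) (fZ : Z.IsNZFlow k o₁ o₂ φ)
      (hlt : Z.edges.card < G.edges.card) : Z.HasNZFlow 6 :=
    by_contra fun h6 => (hmin.2.2.2 Z hZ ⟨k, _, _, _, fZ⟩ h6).not_gt hlt
  have hXpos := hX.edges_nonempty.card_pos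
  have hYpos := hY.edges_nonempty.card_pos
  exact hmin.2.2.1 (h.toIsEdgeSplit.hasNZFlow (hasNZFlow_six hX fX (by omega))
    (hasNZFlow_six hY fY (by omega)))

lemma MinCounterexample.isUnbalanced_left (hmin : MinCounterexample G)
    (h : IsSeriesConn2 G X Y) (hX : IsSP X) (hY : IsSP Y) : X.IsUnbalanced := by
  obtain ⟨k, o₁, o₂, φ, hf⟩ := hmin.2.1
  refine hX.isUnbalanced_or_exists_terminal.resolve_right fun ⟨n, hrel, _⟩ =>
    hmin.excess_mid_ne_zero h hX hY hf ?_
  have hrelX := hrel o₁ o₂ φ (h.sub1.isOrientation hf.orient)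
    (h.isInteriorConserving_left fun v _ _ _ => hf.excess_eq_zero v)
  rw [← h.excess_source, hf.excess_eq_zero, zero_add] at hrelX
  exact (mul_eq_zero.mp hrelX).resolve_left (pow_ne_zero _ (by norm_num))

lemma MinCounterexample.isUnbalanced_right (hmin : MinCounterexample G)
    (h : IsSeriesConn2 G X Y) (hX : IsSP X) (hY : IsSP Y) : Y.IsUnbalanced := by
  obtain ⟨k, o₁, o₂, φ, hf⟩ := hmin.2.1
  refine hY.isUnbalanced_or_exists_terminal.resolve_right fun ⟨n, hrel, _⟩ =>
    hmin.excess_mid_ne_zero h hX hY hf ?_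
  have hrelY := hrel o₁ o₂ φ (h.sub2.isOrientation hf.orient)
    (h.isInteriorConserving_right fun v _ _ _ => hf.excess_eq_zero v)
  have hmid := h.excess_mid (o₁ := o₁) (o₂ := o₂) (φ := φ)
  rw [← h.excess_target, hf.excess_eq_zero, mul_zero, add_zero] at hrelY
  rwa [hf.excess_eq_zero, hrelY, add_zero, eq_comm] at hmid

end MinCounterexample

theorem min_counterexample_endparts_unbalanced_general (G : TTGraph)
    (hmin : MinCounterexample G) :
    ∀ H : TTGraph, IsEndpartOf H G → H.toSignedGraph.IsUnbalanced := by
  intro H hH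
  obtain ⟨hHsp, Y, hYsp, hconn | hconn⟩ := hH.exists_isSeriesConn2
  · exact hmin.isUnbalanced_left hconn hHsp hYsp
  · exact hmin.isUnbalanced_right hconn hYsp hHsp

/-- If `G` is a minimum counterexample and `G` is of series
type, then each endpart of `G` is unbalanced. -/
theorem min_counterexample_endparts_unbalanced (G : TTGraph)
    (hmin : MinCounterexample G) (hser : IsSeriesType G) :
    ∀ H : TTGraph, IsEndpartOf H G → H.toSignedGraph.IsUnbalanced :=
  min_counterexample_endparts_unbalanced_general G hmin
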